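/- arXiv:1701.06097 — 2 statements merged into one kernel-verified Lean document; each statement's English description precedes it below -/
import Mathlib

section
/- For any positive integer s, the integral over θ ∈ [0,1] of log(4 sin²(πθ) + 4 sin²(πsθ)) dθ is at least log 2. -/
/-!
With `u = 2 sin (π θ)` and `v = 2 sin (π s θ)` the integrand is `log (u² + v²)`, and
`u² + v² ≥ 2 |u v|`. Since `∫₀¹ log |sin (π n θ)| dθ = -log 2` for every nonzero integer `n`
(it is `n` periods of `log ∘ sin`, rescaled), the integral of `log (2 |u v|)` is exactly `log 2`.
-/

open Real MeasureTheory

theorem three_mul_log_two_add_log_add_log_le {u v : ℝ} (hu : u ≠ 0) (hv : v ≠ 0) :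
    3 * log 2 + log u + log v ≤ log (4 * u ^ 2 + 4 * v ^ 2) := by
  have hlog8 : 3 * log 2 = log 8 := by rw [← Nat.cast_ofNat, ← log_pow]; norm_num
  rw [hlog8, ← log_mul (by norm_num) hu, ← log_mul (by positivity) hv, ← log_abs]
  refine log_le_log (by positivity) ?_
  calc |8 * u * v| = 4 * (2 * |u| * |v|) := by rw [abs_mul, abs_mul, abs_of_pos (by norm_num : (0 : ℝ) < 8)]; ring
    _ ≤ 4 * (|u| ^ 2 + |v| ^ 2) := by gcongr; exact two_mul_le_add_sq _ _
    _ = 4 * u ^ 2 + 4 * v ^ 2 := by rw [sq_abs, sq_abs]; ring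

theorem ae_sin_mul_ne_zero {c : ℝ} (hc : c ≠ 0) : ∀ᵐ θ : ℝ, sin (c * θ) ≠ 0 := by
  refine measure_mono_null (fun θ (hθ : ¬ sin (c * θ) ≠ 0) => ?_)
    ((Set.countable_range fun n : ℤ => n * π / c).measure_zero volume)
  obtain ⟨n, hn⟩ := sin_eq_zero_iff.mp (not_not.mp hθ)
  exact ⟨n, by simp only [hn, mul_div_cancel_left₀ _ hc]⟩

theorem intervalIntegrable_log_sin_mul (c : ℝ) {a b : ℝ} :
    IntervalIntegrable (fun θ => log (sin (c * θ))) volume a b :=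
  (show AnalyticOnNhd ℝ (fun θ => sin (c * θ)) _ from fun _ _ => by fun_prop)
    |>.meromorphicOn.intervalIntegrable_log

theorem periodic_log_sin : Function.Periodic (fun x => log (sin x)) π := fun x => by
  simp only [sin_add_pi, log_neg_eq_log]

theorem integral_log_sin_pi_int_mul {n : ℤ} (hn : n ≠ 0) :
    ∫ θ in (0 : ℝ)..1, log (sin (π * n * θ)) = -log 2 := by
  have hc : π * n ≠ 0 := mul_ne_zero pi_ne_zero (Int.cast_ne_zero.mpr hn)
  have hperiods := periodic_log_sin.intervalIntegral_add_zsmul_eq n 0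
    fun _ _ => intervalIntegrable_log_sin
  rw [zero_add, zero_add, zsmul_eq_mul, zsmul_eq_mul, integral_log_sin_zero_pi] at hperiods
  rw [intervalIntegral.integral_comp_mul_left (fun x => log (sin x)) hc, mul_zero, mul_one,
    mul_comm π, hperiods, smul_eq_mul]
  field_simp

theorem mahler_measure_laplacian_two_edge_orbits_ge_log_two (s : ℕ) (hs : 0 < s) :
    Real.log 2 ≤
      ∫ θ in (0:ℝ)..1,
        Real.log (4 * Real.sin (π * θ) ^ 2 + 4 * Real.sin (π * s * θ) ^ 2) := by
  have hπs : π * s ≠ 0 := mul_ne_zero pi_ne_zero (Nat.cast_ne_zero.mpr hs.ne')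
  have hmean_one : ∫ θ in (0 : ℝ)..1, log (sin (π * θ)) = -log 2 := by
    simpa using integral_log_sin_pi_int_mul (n := 1) one_ne_zero
  have hmean_s : ∫ θ in (0 : ℝ)..1, log (sin (π * s * θ)) = -log 2 := by
    exact_mod_cast integral_log_sin_pi_int_mul (n := s) (by omega)
  have hlower : ∀ᵐ θ : ℝ, 3 * log 2 + log (sin (π * θ)) + log (sin (π * s * θ)) ≤
      log (4 * sin (π * θ) ^ 2 + 4 * sin (π * s * θ) ^ 2) := by
    filter_upwards [ae_sin_mul_ne_zero pi_ne_zero, ae_sin_mul_ne_zero hπs] with θ hu hv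
    exact three_mul_log_two_add_log_add_log_le hu hv
  have hint_one := intervalIntegrable_log_sin_mul π (a := 0) (b := 1)
  have hint_s := intervalIntegrable_log_sin_mul (π * s) (a := 0) (b := 1)
  have hint : IntervalIntegrable
      (fun θ => log (4 * sin (π * θ) ^ 2 + 4 * sin (π * s * θ) ^ 2)) volume 0 1 :=
    (show AnalyticOnNhd ℝ (fun θ => 4 * sin (π * θ) ^ 2 + 4 * sin (π * s * θ) ^ 2) _ from
      fun _ _ => by fun_prop).meromorphicOn.intervalIntegrable_log
  calc log 2 = 3 * log 2 + -log 2 + -log 2 := by ring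
    _ = ∫ θ in (0 : ℝ)..1, (3 * log 2 + log (sin (π * θ)) + log (sin (π * s * θ))) := by
      rw [intervalIntegral.integral_add (intervalIntegrable_const.add hint_one) hint_s,
        intervalIntegral.integral_add intervalIntegrable_const hint_one,
        intervalIntegral.integral_const, hmean_one, hmean_s, sub_zero, one_smul]
    _ ≤ _ := intervalIntegral.integral_mono_ae zero_le_one
      ((intervalIntegrable_const.add hint_one).add hint_s) hint hlower
end

section
/- For each d, ∫₀¹⋯∫₀¹ log|1 + (1/d)Σᵢ₌₁^d cos(2πθᵢ)| dθ₁⋯dθ_d ≤ 0, i.e., the logarithmic Mahler measure of 2d - Σ(xᵢ + xᵢ^{-1}) equals log(2d) plus a nonpositive correction term. -/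
/-!
Write `avgCos θ = (1/d) ∑ᵢ cos (2π θᵢ)`. Shifting every coordinate by half a period is
measure-preserving on the cube and flips the sign of `avgCos`, so `log |1 + avgCos|` and
`log |1 - avgCos|` have the same integral. Since `log (1 - x) ≤ -x` and `avgCos` has mean zero,
that integral is nonpositive, and the identity follows from
`2d - ∑ᵢ 2 cos (2π θᵢ) = 2d (1 - avgCos θ)`.
Integrability comes from the one-coordinate bound `(1 - cos (2π θᵢ)) / d ≤ 1 - avgCos θ ≤ 2`:
the logarithm of the real-analytic lower bound is integrable.
-/

open Real MeasureTheory Set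

noncomputable section

def halfShift (t : ℝ) : ℝ := if t < 1 / 2 then t + 1 / 2 else t - 1 / 2

lemma measurable_halfShift : Measurable halfShift :=
  Measurable.ite measurableSet_Iio (measurable_add_const _) (measurable_sub_const _)

lemma cos_two_pi_mul_halfShift (t : ℝ) : cos (2 * π * halfShift t) = -cos (2 * π * t) := by
  unfold halfShift
  split_ifs
  · rw [show 2 * π * (t + 1 / 2) = 2 * π * t + π by ring, cos_add_pi]
  · rw [show 2 * π * (t - 1 / 2) = 2 * π * t - π by ring, cos_sub_pi]

lemma measurePreserving_add_const_restrict_Ico (a b c : ℝ) :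
    MeasurePreserving (· + c) (volume.restrict (Ico a b))
      (volume.restrict (Ico (a + c) (b + c))) := by
  simpa [preimage_add_const_Ico] using
    (measurePreserving_add_right volume c).restrict_preimage
      (measurableSet_Ico (a := a + c) (b := b + c))

lemma measurePreserving_halfShift :
    MeasurePreserving halfShift (volume.restrict (Icc (0 : ℝ) 1))
      (volume.restrict (Icc (0 : ℝ) 1)) := by
  rw [← Measure.restrict_congr_set Ico_ae_eq_Icc]
  have hsplit : volume.restrict (Ico (0 : ℝ) 1) =
      volume.restrict (Ico 0 (1 / 2)) + volume.restrict (Ico (1 / 2) 1) := by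
    rw [← Measure.restrict_union Ico_disjoint_Ico_same measurableSet_Ico,
      Ico_union_Ico_eq_Ico (by norm_num) (by norm_num)]
  have hlower : (volume.restrict (Ico (0 : ℝ) (1 / 2))).map halfShift =
      volume.restrict (Ico (1 / 2) 1) := by
    rw [Measure.map_congr (g := (· + 1 / 2))]
    · convert (measurePreserving_add_const_restrict_Ico 0 (1 / 2) (1 / 2)).map_eq using 3 <;>
        norm_num
    · filter_upwards [ae_restrict_mem measurableSet_Ico] with t ht
      rw [halfShift, if_pos ht.2]
  have hupper : (volume.restrict (Ico (1 / 2 : ℝ) 1)).map halfShift =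
      volume.restrict (Ico 0 (1 / 2)) := by
    rw [Measure.map_congr (g := (· + -(1 / 2)))]
    · convert (measurePreserving_add_const_restrict_Ico (1 / 2) 1 (-(1 / 2))).map_eq using 3 <;>
        norm_num
    · filter_upwards [ae_restrict_mem measurableSet_Ico] with t ht
      rw [halfShift, if_neg (not_lt.2 ht.1), sub_eq_add_neg]
  refine ⟨measurable_halfShift, ?_⟩
  rw [hsplit, Measure.map_add _ _ measurable_halfShift, hlower, hupper, add_comm]

instance isProbabilityMeasure_restrict_Icc_zero_one :
    IsProbabilityMeasure (volume.restrict (Icc (0 : ℝ) 1)) :=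
  ⟨by simp⟩

lemma integral_cos_two_pi_mul_Icc : ∫ t in Icc (0 : ℝ) 1, cos (2 * π * t) = 0 := by
  rw [integral_Icc_eq_integral_Ioc, ← intervalIntegral.integral_of_le zero_le_one,
    intervalIntegral.integral_comp_mul_left (fun x => cos x) (by positivity)]
  simp

lemma ae_cos_two_pi_mul_lt_one :
    ∀ᵐ t ∂volume.restrict (Icc (0 : ℝ) 1), cos (2 * π * t) < 1 := by
  rw [← Measure.restrict_congr_set Ioo_ae_eq_Icc]
  filter_upwards [ae_restrict_mem measurableSet_Ioo] with t ⟨ht0, ht1⟩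
  refine (cos_le_one _).lt_of_ne fun h => ?_
  have h0 : 2 * π * t = 0 :=
    (cos_eq_one_iff_of_lt_of_lt (by nlinarith [pi_pos]) (by nlinarith [pi_pos])).1 h
  nlinarith [pi_pos]

lemma integrableOn_log_one_sub_cos_two_pi_mul_div (c : ℝ) :
    IntegrableOn (fun t => log ((1 - cos (2 * π * t)) / c)) (Icc 0 1) := by
  rw [integrableOn_Icc_iff_integrableOn_Ioc,
    ← intervalIntegrable_iff_integrableOn_Ioc_of_le zero_le_one]
  exact AnalyticOnNhd.meromorphicOn (fun _ _ => by fun_prop) |>.intervalIntegrable_log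

abbrev cubeMeasure (d : ℕ) : Measure (Fin d → ℝ) :=
  Measure.pi fun _ => volume.restrict (Icc (0 : ℝ) 1)

section cube

variable {d : ℕ}

lemma integrable_comp_apply {f : ℝ → ℝ} (hf : IntegrableOn f (Icc 0 1)) (i : Fin d) :
    Integrable (fun θ => f (θ i)) (cubeMeasure d) :=
  integrable_comp_eval hf

lemma integral_comp_apply {f : ℝ → ℝ} (hf : AEStronglyMeasurable f (volume.restrict (Icc 0 1)))
    (i : Fin d) : ∫ θ, f (θ i) ∂cubeMeasure d = ∫ t in Icc 0 1, f t :=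
  integral_comp_eval hf

lemma ae_comp_apply {p : ℝ → Prop} (hp : ∀ᵐ t ∂volume.restrict (Icc (0 : ℝ) 1), p t)
    (i : Fin d) : ∀ᵐ θ ∂cubeMeasure d, p (θ i) :=
  (measurePreserving_eval _ i).quasiMeasurePreserving.ae hp

end cube

def avgCos (d : ℕ) (θ : Fin d → ℝ) : ℝ := 1 / (d : ℝ) * ∑ i, cos (2 * π * θ i)

section avgCos

variable {d : ℕ}

lemma avgCos_halfShift (θ : Fin d → ℝ) : avgCos d (fun i => halfShift (θ i)) = -avgCos d θ := by
  simp [avgCos, cos_two_pi_mul_halfShift]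

lemma continuous_avgCos : Continuous (avgCos d) := by
  unfold avgCos
  fun_prop

lemma mul_one_sub_avgCos (hd : 0 < d) (θ : Fin d → ℝ) :
    d * (1 - avgCos d θ) = ∑ i, (1 - cos (2 * π * θ i)) := by
  have : (d : ℝ) ≠ 0 := by positivity
  simp only [avgCos, one_div, Finset.sum_sub_distrib, Finset.sum_const, Finset.card_univ,
    Fintype.card_fin, nsmul_eq_mul, mul_one]
  field_simp

lemma one_sub_cos_two_pi_mul_div_le_one_sub_avgCos (hd : 0 < d) (θ : Fin d → ℝ) (i : Fin d) :
    (1 - cos (2 * π * θ i)) / d ≤ 1 - avgCos d θ := by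
  rw [div_le_iff₀' (by positivity), mul_one_sub_avgCos hd]
  exact Finset.single_le_sum (f := fun j => 1 - cos (2 * π * θ j))
    (fun j _ => sub_nonneg.2 (cos_le_one _)) (Finset.mem_univ i)

lemma one_sub_avgCos_le_two (hd : 0 < d) (θ : Fin d → ℝ) : 1 - avgCos d θ ≤ 2 := by
  rw [← mul_le_mul_iff_of_pos_left (show (0 : ℝ) < d by positivity), mul_one_sub_avgCos hd]
  calc ∑ i, (1 - cos (2 * π * θ i)) ≤ ∑ _i : Fin d, (2 : ℝ) :=
        Finset.sum_le_sum fun i _ => by linarith [neg_one_le_cos (2 * π * θ i)]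
    _ = d * 2 := by simp

lemma ae_one_sub_avgCos_pos (hd : 0 < d) : ∀ᵐ θ ∂cubeMeasure d, 0 < 1 - avgCos d θ := by
  let i : Fin d := ⟨0, hd⟩
  filter_upwards [ae_comp_apply ae_cos_two_pi_mul_lt_one i] with θ hθ
  exact (div_pos (sub_pos.2 hθ) (by positivity)).trans_le
    (one_sub_cos_two_pi_mul_div_le_one_sub_avgCos hd θ i)

lemma integrable_cos_two_pi_mul_apply (i : Fin d) :
    Integrable (fun θ => cos (2 * π * θ i)) (cubeMeasure d) :=
  integrable_comp_apply (by fun_prop : Continuous fun t => cos (2 * π * t)).integrableOn_Icc i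

lemma integrable_avgCos : Integrable (avgCos d) (cubeMeasure d) :=
  (integrable_finsetSum _ fun i _ => integrable_cos_two_pi_mul_apply i).const_mul _

lemma integral_avgCos : ∫ θ, avgCos d θ ∂cubeMeasure d = 0 := by
  simp only [avgCos, integral_const_mul]
  rw [integral_finsetSum _ fun i _ => integrable_cos_two_pi_mul_apply i]
  simp [integral_comp_apply (f := fun t => cos (2 * π * t)) (by fun_prop),
    integral_cos_two_pi_mul_Icc]

lemma integrable_log_abs_one_sub_avgCos (hd : 0 < d) :
    Integrable (fun θ => log |1 - avgCos d θ|) (cubeMeasure d) := by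
  let i : Fin d := ⟨0, hd⟩
  have hbound : Integrable (fun θ => |log ((1 - cos (2 * π * θ i)) / d)| + |log 2|)
      (cubeMeasure d) :=
    (integrable_comp_apply (integrableOn_log_one_sub_cos_two_pi_mul_div d).abs i).add
      (integrable_const _)
  refine hbound.mono'
    (continuous_const.sub continuous_avgCos).abs.measurable.log.aestronglyMeasurable ?_
  filter_upwards [ae_comp_apply ae_cos_two_pi_mul_lt_one i] with θ hθ
  have hlow := one_sub_cos_two_pi_mul_div_le_one_sub_avgCos hd θ i
  have hpos : 0 < (1 - cos (2 * π * θ i)) / d := div_pos (sub_pos.2 hθ) (by positivity)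
  rw [norm_eq_abs, abs_of_pos (hpos.trans_le hlow)]
  exact (abs_le_max_abs_abs (log_le_log hpos hlow)
    (log_le_log (hpos.trans_le hlow) (one_sub_avgCos_le_two hd θ))).trans
    (max_le_add_of_nonneg (abs_nonneg _) (abs_nonneg _))

lemma integral_log_abs_one_add_avgCos :
    ∫ θ, log |1 + avgCos d θ| ∂cubeMeasure d = ∫ θ, log |1 - avgCos d θ| ∂cubeMeasure d := by
  have hshift : MeasurePreserving (fun θ : Fin d → ℝ => fun i => halfShift (θ i))
      (cubeMeasure d) (cubeMeasure d) :=
    measurePreserving_pi _ _ fun _ => measurePreserving_halfShift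
  calc ∫ θ, log |1 + avgCos d θ| ∂cubeMeasure d
      = ∫ θ, log |1 - avgCos d (fun i => halfShift (θ i))| ∂cubeMeasure d := by
        simp [avgCos_halfShift]
    _ = ∫ θ, log |1 - avgCos d θ| ∂(cubeMeasure d).map fun θ i => halfShift (θ i) :=
        (integral_map hshift.measurable.aemeasurable
          (continuous_const.sub continuous_avgCos).abs.measurable.log.aestronglyMeasurable).symm
    _ = ∫ θ, log |1 - avgCos d θ| ∂cubeMeasure d := by rw [hshift.map_eq]

lemma integral_log_abs_one_sub_avgCos_nonpos (hd : 0 < d) :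
    ∫ θ, log |1 - avgCos d θ| ∂cubeMeasure d ≤ 0 :=
  calc ∫ θ, log |1 - avgCos d θ| ∂cubeMeasure d
      ≤ ∫ θ, -avgCos d θ ∂cubeMeasure d := by
        refine integral_mono_ae (integrable_log_abs_one_sub_avgCos hd) integrable_avgCos.neg ?_
        filter_upwards [ae_one_sub_avgCos_pos hd] with θ hθ
        rw [abs_of_pos hθ]
        linarith [log_le_sub_one_of_pos hθ]
    _ = 0 := by rw [integral_neg, integral_avgCos, neg_zero]

end avgCos

theorem integral_log_one_add_avg_cos_nonpos (d : ℕ) (hd : 1 ≤ d) :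
    (∫ θ in (Set.univ.pi fun _ : Fin d => Set.Icc (0:ℝ) 1),
        Real.log |1 + (1 / (d : ℝ)) * ∑ i, Real.cos (2 * π * θ i)|) ≤ 0 ∧
    (∫ θ in (Set.univ.pi fun _ : Fin d => Set.Icc (0:ℝ) 1),
        Real.log |2 * d - ∑ i, 2 * Real.cos (2 * π * θ i)|) =
      Real.log (2 * d) +
        ∫ θ in (Set.univ.pi fun _ : Fin d => Set.Icc (0:ℝ) 1),
          Real.log |1 + (1 / (d : ℝ)) * ∑ i, Real.cos (2 * π * θ i)| := by
  rw [volume_pi, Measure.restrict_pi_pi]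
  change ∫ θ, log |1 + avgCos d θ| ∂cubeMeasure d ≤ 0 ∧
    _ = _ + ∫ θ, log |1 + avgCos d θ| ∂cubeMeasure d
  rw [integral_log_abs_one_add_avgCos]
  refine ⟨integral_log_abs_one_sub_avgCos_nonpos hd, ?_⟩
  have hfactor : ∀ᵐ θ ∂cubeMeasure d,
      log |2 * d - ∑ i, 2 * cos (2 * π * θ i)| = log (2 * d) + log |1 - avgCos d θ| := by
    filter_upwards [ae_one_sub_avgCos_pos hd] with θ hθ
    have hsum : 2 * (d : ℝ) - ∑ i, 2 * cos (2 * π * θ i) = 2 * d * (1 - avgCos d θ) := by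
      rw [mul_assoc, mul_one_sub_avgCos hd, ← Finset.mul_sum, Finset.sum_sub_distrib]
      simp [mul_sub]
    rw [hsum, abs_mul, abs_of_pos (by positivity),
      log_mul (by positivity) (abs_pos.2 hθ.ne').ne']
  rw [integral_congr_ae hfactor,
    integral_add (integrable_const _) (integrable_log_abs_one_sub_avgCos hd)]
  simp
end
end
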